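/- arXiv:1506.00414 — 4 statements merged into one kernel-verified Lean document; each statement's English description precedes it below -/
import Mathlib

section
/- Let H be a Hilbert space, C12 : H → H bounded with ‖C12‖ < 1 and C21 = C12*, and M1 = {(f1, C21 f1) : f1 ∈ H}, M2 = {(C12 f2, f2) : f2 ∈ H} ⊆ H × H. Then M1 + M2 = H × H, i.e., every h ∈ H × H can be written as a sum of an element of M1 and an element of M2. -/
open ContinuousLinearMap

/-
The system reduces to `(1 - B A) f₂ = g₂ - B g₁` together with `f₁ = g₁ - A f₂`, and
`1 - B A` is invertible by the Neumann series as soon as `‖B A‖ < 1`. For `A = C₁₂`,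
`B = C₁₂*` this holds because `‖C₁₂* C₁₂‖ = ‖C₁₂‖² < 1`.
-/

section

variable {𝕜 E F : Type*} [NontriviallyNormedField 𝕜]
  [NormedAddCommGroup E] [NormedSpace 𝕜 E] [NormedAddCommGroup F] [NormedSpace 𝕜 F]

theorem ContinuousLinearMap.exists_one_sub_apply_eq [CompleteSpace F] (T : F →L[𝕜] F)
    (hT : ‖T‖ < 1) (y : F) : ∃ x, x - T x = y := by
  let u := Units.oneSub T hT
  refine ⟨(↑u⁻¹ : F →L[𝕜] F) y, ?_⟩
  change ((↑u * ↑u⁻¹ : F →L[𝕜] F)) y = y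
  rw [u.mul_inv, one_apply_eq_self]

theorem ContinuousLinearMap.exists_add_apply_eq_of_norm_comp_lt_one [CompleteSpace F]
    (A : F →L[𝕜] E) (B : E →L[𝕜] F) (hBA : ‖B ∘L A‖ < 1) (g₁ : E) (g₂ : F) :
    ∃ f₁ f₂, g₁ = f₁ + A f₂ ∧ g₂ = B f₁ + f₂ := by
  obtain ⟨f₂, hf₂⟩ := (B ∘L A).exists_one_sub_apply_eq hBA (g₂ - B g₁)
  refine ⟨g₁ - A f₂, f₂, by abel, ?_⟩
  rw [comp_apply] at hf₂
  rw [map_sub]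
  linear_combination (norm := module) -hf₂

end

theorem ContinuousLinearMap.norm_adjoint_comp_self_lt_one
    {𝕜 H : Type*} [RCLike 𝕜] [NormedAddCommGroup H] [InnerProductSpace 𝕜 H] [CompleteSpace H]
    (T : H →L[𝕜] H) (hT : ‖T‖ < 1) : ‖adjoint T ∘L T‖ < 1 := by
  rw [norm_adjoint_comp_self, ← sq]
  exact pow_lt_one₀ (norm_nonneg T) hT two_ne_zero

/-- Proposition 2.7 (surjectivity): if `‖C12‖ < 1` and `C21 = C12*`, then `M1 + M2 = H × H`,
i.e. every `(g1, g2)` can be written as `(f1, C21 f1) + (C12 f2, f2)`. -/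
theorem graphs_span
    {H : Type*} [NormedAddCommGroup H] [InnerProductSpace ℝ H] [CompleteSpace H]
    (C12 : H →L[ℝ] H) (hC : ‖C12‖ < 1) :
    ∀ g1 g2 : H, ∃ f1 f2 : H,
      g1 = f1 + C12 f2 ∧ g2 = ContinuousLinearMap.adjoint C12 f1 + f2 :=
  exists_add_apply_eq_of_norm_comp_lt_one C12 (adjoint C12) (norm_adjoint_comp_self_lt_one C12 hC)
end

section
/- With the setup of the two-process CCA: H a Hilbert space, C12 : H → H bounded with ‖C12‖ < 1, C21 = C12*, Q(f1,f2) = (f1 + C12 f2, C21 f1 + f2) on H0 = H × H, and H(Q) = H0 equipped with inner product ⟨h, h'⟩_{H(Q)} = ⟨h, Q⁻¹ h'⟩_0. Let M1 = {(f1, C21 f1)} and M2 = {(C12 f2, f2)}. Then for h = (C12 f2, f2) ∈ M2, the orthogonal projection of h onto M1 in H(Q) equals (C12 f2, C21 C12 f2), and consequently h − P_{M1} h = (0, (I − C21 C12) f2). -/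
open scoped RealInnerProductSpace
open ContinuousLinearMap

/-- The element of `H₀ = H × H` (with the ℓ² product structure) with components `a, b`. -/
noncomputable def mk2 {H : Type*} (a b : H) : WithLp 2 (H × H) := (WithLp.equiv 2 (H × H)).symm (a, b)

/-- First component. -/
noncomputable def pr1 {H : Type*} (p : WithLp 2 (H × H)) : H := (WithLp.equiv 2 (H × H) p).1

/-- Second component. -/
noncomputable def pr2 {H : Type*} (p : WithLp 2 (H × H)) : H := (WithLp.equiv 2 (H × H) p).2

lemma mk2_sub {H : Type*} [AddCommGroup H] (a b a' b' : H) :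
    mk2 a b - mk2 a' b' = mk2 (a - a') (b - b') := rfl

/-- Proposition A.2: in `H(Q)` (inner product `⟪h, Q⁻¹ h'⟫₀`), for `h = (C12 f2, f2) ∈ M2`
the orthogonal projection of `h` onto `M1 = {(f1, C21 f1)}` is `(C12 f2, C21 C12 f2)`
(i.e. `h` minus that element of `M1` is `H(Q)`-orthogonal to `M1`), and consequently
`h − P_{M1} h = (0, (I − C21 C12) f2)`. -/
theorem projection_onto_M1_formula
    {H : Type*} [NormedAddCommGroup H] [InnerProductSpace ℝ H] [CompleteSpace H]
    (C12 : H →L[ℝ] H) (hC : ‖C12‖ < 1)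
    (Q Qinv : WithLp 2 (H × H) →L[ℝ] WithLp 2 (H × H))
    (hQ : ∀ p : WithLp 2 (H × H),
      Q p = mk2 (pr1 p + C12 (pr2 p)) (ContinuousLinearMap.adjoint C12 (pr1 p) + pr2 p))
    (hQQi : Q ∘L Qinv = 1) (hQiQ : Qinv ∘L Q = 1) :
    ∀ f2 : H,
      (∀ f1 : H,
        ⟪mk2 (C12 f2) f2 - mk2 (C12 f2) (ContinuousLinearMap.adjoint C12 (C12 f2)),
          Qinv (mk2 f1 (ContinuousLinearMap.adjoint C12 f1))⟫ = 0) ∧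
      mk2 (C12 f2) f2 - mk2 (C12 f2) (ContinuousLinearMap.adjoint C12 (C12 f2))
        = mk2 0 (f2 - ContinuousLinearMap.adjoint C12 (C12 f2)) := by
  intro f2
  have hdiff : mk2 (C12 f2) f2 - mk2 (C12 f2) (ContinuousLinearMap.adjoint C12 (C12 f2))
      = mk2 0 (f2 - ContinuousLinearMap.adjoint C12 (C12 f2)) := by
    rw [mk2_sub, sub_self]
  refine ⟨fun f1 => ?_, hdiff⟩
  have hQf1 : Q (mk2 f1 0) = mk2 f1 (ContinuousLinearMap.adjoint C12 f1) := by
    rw [hQ]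
    simp [mk2, pr1, pr2]
  have hQi : Qinv (mk2 f1 (ContinuousLinearMap.adjoint C12 f1)) = mk2 f1 0 := by
    rw [← hQf1]
    have := congrArg (fun T => T (mk2 f1 0)) hQiQ
    simpa using this
  rw [hdiff, hQi]
  show (inner ℝ (mk2 (0:H) _) (mk2 f1 0) : ℝ) = 0
  simp [mk2, WithLp.prod_inner_apply]
end

section
/- With the two-process CCA setup and B = P_{L1|M2}(P_{L2|M2})⁻¹ as above, the adjoint of B (from L2 to L1 = M1 within H(Q)) satisfies B*(f1, C21 f1) = (0, C21 f1) for every f1 ∈ H. -/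
open scoped RealInnerProductSpace
open ContinuousLinearMap

/-- Corollary A.6: `B*(f1, C21 f1) = (0, C21 f1)`, expressed through the defining adjoint
identity `⟪(f1, C21 f1), B(0, f̃2)⟫_{H(Q)} = ⟪(0, C21 f1), (0, f̃2)⟫_{H(Q)}`, where
`B(0, f̃2) = (C12 K f̃2, C21 C12 K f̃2)` with `K = (I − C21 C12)⁻¹` and
`⟪h, h'⟫_{H(Q)} = ⟪h, Q⁻¹ h'⟫₀`. -/
theorem Bstar_formula
    {H : Type*} [NormedAddCommGroup H] [InnerProductSpace ℝ H] [CompleteSpace H]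
    (C12 K : H →L[ℝ] H) (hC : ‖C12‖ < 1)
    (Q Qinv : WithLp 2 (H × H) →L[ℝ] WithLp 2 (H × H))
    (hQ : ∀ p : WithLp 2 (H × H),
      Q p = mk2 (pr1 p + C12 (pr2 p)) (ContinuousLinearMap.adjoint C12 (pr1 p) + pr2 p))
    (hQQi : Q ∘L Qinv = 1) (hQiQ : Qinv ∘L Q = 1)
    (hK1 : ((1 : H →L[ℝ] H) - ContinuousLinearMap.adjoint C12 ∘L C12) ∘L K = 1)
    (hK2 : K ∘L ((1 : H →L[ℝ] H) - ContinuousLinearMap.adjoint C12 ∘L C12) = 1) :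
    ∀ (f1 ftilde : H),
      ⟪mk2 f1 (ContinuousLinearMap.adjoint C12 f1),
        Qinv (mk2 (C12 (K ftilde))
          (ContinuousLinearMap.adjoint C12 (C12 (K ftilde))))⟫
      = ⟪mk2 0 (ContinuousLinearMap.adjoint C12 f1), Qinv (mk2 0 ftilde)⟫ := by

  intro f1 ftilde
  have Qi_eq : ∀ u v : WithLp 2 (H × H), Q u = v → Qinv v = u := by
    intro u v h
    have := ContinuousLinearMap.ext_iff.mp hQiQ u
    simpa [ContinuousLinearMap.comp_apply, h] using this
  have hK2' : ∀ x, K x - K (ContinuousLinearMap.adjoint C12 (C12 x)) = x := by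
    intro x
    have := ContinuousLinearMap.ext_iff.mp hK2 x
    simpa [ContinuousLinearMap.comp_apply, ContinuousLinearMap.sub_apply, map_sub] using this
  have hK1' : ∀ x, K x - ContinuousLinearMap.adjoint C12 (C12 (K x)) = x := by
    intro x
    have := ContinuousLinearMap.ext_iff.mp hK1 x
    simpa [ContinuousLinearMap.comp_apply, ContinuousLinearMap.sub_apply] using this
  have e1 : Qinv (mk2 (C12 (K ftilde)) (ContinuousLinearMap.adjoint C12 (C12 (K ftilde))))
      = mk2 (C12 (K ftilde)) 0 := by
    apply Qi_eq
    rw [hQ]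
    have h1 : pr1 (mk2 (C12 (K ftilde)) (0 : H)) = C12 (K ftilde) := rfl
    have h2 : pr2 (mk2 (C12 (K ftilde)) (0 : H)) = 0 := rfl
    rw [h1, h2]
    simp
  have e2 : Qinv (mk2 (0 : H) ftilde) = mk2 (-(C12 (K ftilde))) (K ftilde) := by
    apply Qi_eq
    rw [hQ]
    have h1 : pr1 (mk2 (-(C12 (K ftilde))) (K ftilde)) = -(C12 (K ftilde)) := rfl
    have h2 : pr2 (mk2 (-(C12 (K ftilde))) (K ftilde)) = K ftilde := rfl
    rw [h1, h2]
    have : -C12 (K ftilde) + C12 (K ftilde) = 0 := by abel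
    rw [this]
    congr 1
    have := hK1' ftilde
    rw [map_neg, neg_add_eq_sub]
    exact this
  have fst_mk2 : ∀ a b : H, (WithLp.ofLp (mk2 a b)).fst = a := fun _ _ => rfl
  have snd_mk2 : ∀ a b : H, (WithLp.ofLp (mk2 a b)).snd = b := fun _ _ => rfl
  rw [e1, e2, WithLp.prod_inner_apply, WithLp.prod_inner_apply]
  simp only [fst_mk2, snd_mk2, inner_zero_left, inner_zero_right, add_zero, zero_add]
  rw [ContinuousLinearMap.adjoint_inner_left]
end

section
/- Three-process setting: let H be a Hilbert space and C12, C13, C23 : H → H bounded with adjoints C21, C31, C32, with ‖C12‖ < 1, ‖C13‖ < 1. Suppose (strict partial no-perfect-prediction) for all nonzero f2, f3 ∈ H: |⟨f2, (C23 − C21 C13) f3⟩| < ⟨f2, (I − C21 C12) f2⟩^{1/2} ⟨f3, (I − C31 C13) f3⟩^{1/2}. If moreover C23 − C21 C13 is compact, then ‖(I − C21 C12)^{−1/2} (C23 − C21 C13) (I − C31 C13)^{−1/2}‖ < 1. -/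
open scoped RealInnerProductSpace
open ContinuousLinearMap

set_option maxHeartbeats 1000000 in
/-- Lemma 3.4: `C22.1 = I − C21 C12`, `C33.1 = I − C31 C13` with positive invertible
square roots whose inverses are `S2 = C22.1^{-1/2}`, `S3 = C33.1^{-1/2}`. Under the strict
no-perfect-prediction inequality and compactness of `C23 − C21 C13`,
`‖C22.1^{-1/2} (C23 − C21 C13) C33.1^{-1/2}‖ < 1`. -/
theorem norm_partial_cross_operator_lt_one
    {H : Type*} [NormedAddCommGroup H] [InnerProductSpace ℝ H] [CompleteSpace H]
    (C12 C13 C23 : H →L[ℝ] H) (h12 : ‖C12‖ < 1) (h13 : ‖C13‖ < 1)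
    (R2 R3 S2 S3 : H →L[ℝ] H)
    (hR2sa : IsSelfAdjoint R2) (hR2pos : R2.IsPositive)
    (hR3sa : IsSelfAdjoint R3) (hR3pos : R3.IsPositive)
    (hR2sq : R2 ∘L R2 = (1 : H →L[ℝ] H) - ContinuousLinearMap.adjoint C12 ∘L C12)
    (hR3sq : R3 ∘L R3 = (1 : H →L[ℝ] H) - ContinuousLinearMap.adjoint C13 ∘L C13)
    (hS2 : R2 ∘L S2 = 1) (hS2' : S2 ∘L R2 = 1)
    (hS3 : R3 ∘L S3 = 1) (hS3' : S3 ∘L R3 = 1)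
    (hstrict : ∀ (f2 f3 : H), f2 ≠ 0 → f3 ≠ 0 →
      |(⟪f2, (C23 - ContinuousLinearMap.adjoint C12 ∘L C13) f3⟫ : ℝ)| <
        Real.sqrt ⟪f2, ((1 : H →L[ℝ] H) - ContinuousLinearMap.adjoint C12 ∘L C12) f2⟫ *
        Real.sqrt ⟪f3, ((1 : H →L[ℝ] H) - ContinuousLinearMap.adjoint C13 ∘L C13) f3⟫)
    (hcpt : IsCompactOperator (⇑(C23 - ContinuousLinearMap.adjoint C12 ∘L C13))) :
    ‖S2 ∘L (C23 - ContinuousLinearMap.adjoint C12 ∘L C13) ∘L S3‖ < 1 := by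
  set D : H →L[ℝ] H := C23 - ContinuousLinearMap.adjoint C12 ∘L C13 with hD
  set T : H →L[ℝ] H := S2 ∘L D ∘L S3 with hT
  -- S2 and S3 are self-adjoint
  have hS2sa : ContinuousLinearMap.adjoint S2 = S2 := by
    have h1 : ContinuousLinearMap.adjoint S2 ∘L R2 = 1 := by
      have := congrArg ContinuousLinearMap.adjoint hS2
      have hadj1 : ContinuousLinearMap.adjoint (1 : H →L[ℝ] H) = 1 := by
        rw [← ContinuousLinearMap.star_eq_adjoint, star_one]
      rwa [adjoint_comp, hR2sa.adjoint_eq, hadj1] at this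
    calc ContinuousLinearMap.adjoint S2
        = ContinuousLinearMap.adjoint S2 ∘L (R2 ∘L S2) := by rw [hS2]; ext x; simp
      _ = (ContinuousLinearMap.adjoint S2 ∘L R2) ∘L S2 := by rw [ContinuousLinearMap.comp_assoc]
      _ = S2 := by rw [h1]; ext x; simp
  have hS3sa : ContinuousLinearMap.adjoint S3 = S3 := by
    have h1 : ContinuousLinearMap.adjoint S3 ∘L R3 = 1 := by
      have := congrArg ContinuousLinearMap.adjoint hS3
      have hadj1 : ContinuousLinearMap.adjoint (1 : H →L[ℝ] H) = 1 := by
        rw [← ContinuousLinearMap.star_eq_adjoint, star_one]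
      rwa [adjoint_comp, hR3sa.adjoint_eq, hadj1] at this
    calc ContinuousLinearMap.adjoint S3
        = ContinuousLinearMap.adjoint S3 ∘L (R3 ∘L S3) := by rw [hS3]; ext x; simp
      _ = (ContinuousLinearMap.adjoint S3 ∘L R3) ∘L S3 := by rw [ContinuousLinearMap.comp_assoc]
      _ = S3 := by rw [h1]; ext x; simp
  -- S2, S3 injective
  have hS2inj : ∀ x : H, S2 x = 0 → x = 0 := fun x hx => by
    have := congrFun (congrArg (fun A : H →L[ℝ] H => (A : H → H)) hS2) x
    simp only [ContinuousLinearMap.coe_comp', Function.comp_apply,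
      ContinuousLinearMap.one_apply] at this
    rw [hx] at this; simpa using this.symm
  have hS3inj : ∀ x : H, S3 x = 0 → x = 0 := fun x hx => by
    have := congrFun (congrArg (fun A : H →L[ℝ] H => (A : H → H)) hS3) x
    simp only [ContinuousLinearMap.coe_comp', Function.comp_apply,
      ContinuousLinearMap.one_apply] at this
    rw [hx] at this; simpa using this.symm
  have hR2S2 : ∀ x : H, R2 (S2 x) = x := fun x => by
    have := congrFun (congrArg (fun A : H →L[ℝ] H => (A : H → H)) hS2) x
    simpa using this
  have hR3S3 : ∀ x : H, R3 (S3 x) = x := fun x => by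
    have := congrFun (congrArg (fun A : H →L[ℝ] H => (A : H → H)) hS3) x
    simpa using this
  -- Key strict inequality for T
  have hkey : ∀ g2 g3 : H, g2 ≠ 0 → g3 ≠ 0 → |(⟪g2, T g3⟫ : ℝ)| < ‖g2‖ * ‖g3‖ := by
    intro g2 g3 hg2 hg3
    have hf2 : S2 g2 ≠ 0 := fun h => hg2 (hS2inj g2 h)
    have hf3 : S3 g3 ≠ 0 := fun h => hg3 (hS3inj g3 h)
    have h1 : (⟪g2, T g3⟫ : ℝ) = ⟪S2 g2, D (S3 g3)⟫ := by
      rw [hT]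
      simp only [ContinuousLinearMap.coe_comp', Function.comp_apply]
      conv_lhs => rw [← hS2sa]
      exact adjoint_inner_right S2 g2 (D (S3 g3))
    have h2 : (⟪S2 g2, ((1 : H →L[ℝ] H) - ContinuousLinearMap.adjoint C12 ∘L C12) (S2 g2)⟫ : ℝ)
        = ‖g2‖ ^ 2 := by
      rw [← hR2sq]
      have e1 : ((R2 ∘L R2) (S2 g2) : H) = R2 (R2 (S2 g2)) := rfl
      have e2 : (⟪S2 g2, R2 (R2 (S2 g2))⟫ : ℝ) = ⟪R2 (S2 g2), R2 (S2 g2)⟫ :=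
        (hR2sa.isSymmetric (S2 g2) (R2 (S2 g2))).symm
      rw [e1, e2, hR2S2, real_inner_self_eq_norm_sq]
    have h3 : (⟪S3 g3, ((1 : H →L[ℝ] H) - ContinuousLinearMap.adjoint C13 ∘L C13) (S3 g3)⟫ : ℝ)
        = ‖g3‖ ^ 2 := by
      rw [← hR3sq]
      have e1 : ((R3 ∘L R3) (S3 g3) : H) = R3 (R3 (S3 g3)) := rfl
      have e2 : (⟪S3 g3, R3 (R3 (S3 g3))⟫ : ℝ) = ⟪R3 (S3 g3), R3 (S3 g3)⟫ :=
        (hR3sa.isSymmetric (S3 g3) (R3 (S3 g3))).symm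
      rw [e1, e2, hR3S3, real_inner_self_eq_norm_sq]
    have := hstrict (S2 g2) (S3 g3) hf2 hf3
    rw [h2, h3, Real.sqrt_sq (norm_nonneg _), Real.sqrt_sq (norm_nonneg _)] at this
    rw [h1]; exact this
  -- ‖T g‖ ≤ ‖g‖
  have hle : ∀ g : H, ‖T g‖ ≤ ‖g‖ := by
    intro g
    by_cases hg : g = 0
    · simp [hg]
    by_cases hTg : T g = 0
    · simp [hTg, norm_nonneg]
    have := hkey (T g) g hTg hg
    rw [real_inner_self_eq_norm_sq, abs_of_nonneg (by positivity)] at this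
    have hTgpos : 0 < ‖T g‖ := norm_pos_iff.mpr hTg
    nlinarith
  have hTnorm_le : ‖T‖ ≤ 1 := by
    apply ContinuousLinearMap.opNorm_le_bound _ zero_le_one
    intro x; rw [one_mul]; exact hle x
  -- T is compact
  have hTcpt : IsCompactOperator (⇑T) := by
    have h1 : IsCompactOperator (⇑D ∘ ⇑S3) := hcpt.comp_clm S3
    have h2 : IsCompactOperator (⇑S2 ∘ (⇑D ∘ ⇑S3)) := h1.continuous_comp S2.continuous
    have : ⇑T = ⇑S2 ∘ (⇑D ∘ ⇑S3) := by rfl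
    rwa [this]
  -- T* T compact
  set TT : H →L[ℝ] H := ContinuousLinearMap.adjoint T ∘L T with hTT
  have hTTcpt : IsCompactOperator (⇑TT) :=
    hTcpt.continuous_comp (ContinuousLinearMap.adjoint T).continuous
  -- Suppose ‖T‖ = 1, derive contradiction
  by_contra hcon
  push_neg at hcon
  have hTnorm : ‖T‖ = 1 := le_antisymm hTnorm_le hcon
  -- choose sequence
  have hseq : ∀ n : ℕ, ∃ x : H, ‖x‖ < 1 ∧ 1 - 1 / (n + 1 : ℝ) < ‖T x‖ := by
    intro n
    apply ContinuousLinearMap.exists_lt_apply_of_lt_opNorm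
    rw [hTnorm]
    have : (0 : ℝ) < 1 / (n + 1 : ℝ) := by positivity
    linarith
  choose u hu1 hu2 using hseq
  have huball : ∀ n, u n ∈ Metric.closedBall (0 : H) 1 := fun n => by
    simp [Metric.mem_closedBall, dist_zero_right, (hu1 n).le]
  have hTu_le : ∀ n, ‖T (u n)‖ ≤ 1 := fun n => (hle (u n)).trans (hu1 n).le
  have hTu_lim : Filter.Tendsto (fun n => ‖T (u n)‖) Filter.atTop (nhds 1) := by
    have hlo : Filter.Tendsto (fun n : ℕ => 1 - 1 / (n + 1 : ℝ)) Filter.atTop (nhds 1) := by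
      have := tendsto_one_div_add_atTop_nhds_zero_nat (𝕜 := ℝ)
      have := (tendsto_const_nhds (x := (1 : ℝ)) (f := Filter.atTop (α := ℕ))).sub this
      simpa using this
    exact tendsto_of_tendsto_of_tendsto_of_le_of_le hlo tendsto_const_nhds
      (fun n => (hu2 n).le) hTu_le
  -- ‖TT u n - u n‖ → 0
  have hdiff : Filter.Tendsto (fun n => TT (u n) - u n) Filter.atTop (nhds 0) := by
    rw [tendsto_zero_iff_norm_tendsto_zero]
    have hbound : ∀ n, ‖TT (u n) - u n‖ ^ 2 ≤ 2 - 2 * ‖T (u n)‖ ^ 2 := by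
      intro n
      have he : ‖TT (u n) - u n‖ ^ 2
          = ‖TT (u n)‖ ^ 2 - 2 * ⟪TT (u n), u n⟫ + ‖u n‖ ^ 2 :=
        norm_sub_sq_real (TT (u n)) (u n)
      have hip : (⟪TT (u n), u n⟫ : ℝ) = ‖T (u n)‖ ^ 2 := by
        have : (⟪TT (u n), u n⟫ : ℝ) = ⟪T (u n), T (u n)⟫ := by
          rw [hTT]
          simp only [ContinuousLinearMap.coe_comp', Function.comp_apply]
          rw [adjoint_inner_left]
        rw [this, real_inner_self_eq_norm_sq]
      have hTTle : ‖TT (u n)‖ ≤ 1 := by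
        calc ‖TT (u n)‖ ≤ ‖ContinuousLinearMap.adjoint T‖ * ‖T (u n)‖ := by
              rw [hTT]
              simpa using (ContinuousLinearMap.le_opNorm (ContinuousLinearMap.adjoint T) (T (u n)))
          _ ≤ 1 * 1 := by
              apply mul_le_mul _ (hTu_le n) (norm_nonneg _) zero_le_one
              rw [LinearIsometryEquiv.norm_map ContinuousLinearMap.adjoint T, hTnorm]
          _ = 1 := one_mul 1
      have hun : ‖u n‖ ≤ 1 := (hu1 n).le
      rw [he, hip]
      nlinarith [norm_nonneg (TT (u n)), norm_nonneg (u n)]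
    have hsq : Filter.Tendsto (fun n => 2 - 2 * ‖T (u n)‖ ^ 2) Filter.atTop (nhds 0) := by
      have := ((hTu_lim.mul hTu_lim).const_mul (2:ℝ)).const_sub 2
      simpa [pow_two, mul_one] using this
    have h0 : Filter.Tendsto (fun n => ‖TT (u n) - u n‖ ^ 2) Filter.atTop (nhds 0) := by
      apply tendsto_of_tendsto_of_tendsto_of_le_of_le tendsto_const_nhds hsq
      · intro n; positivity
      · exact hbound
    have := h0.sqrt
    simpa [Real.sqrt_sq (norm_nonneg _)] using this
  -- compactness: subsequence of TT (u n) converges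
  obtain ⟨K, hKcpt, hKsub⟩ := hTTcpt.image_closedBall_subset_compact
    (f := (TT : H →ₗ[ℝ] H)) 1
  have hmem : ∀ n, TT (u n) ∈ K := fun n => hKsub ⟨u n, huball n, rfl⟩
  obtain ⟨y, -, φ, hφ, hconv⟩ := hKcpt.tendsto_subseq hmem
  -- then u ∘ φ → y
  have huconv : Filter.Tendsto (fun n => u (φ n)) Filter.atTop (nhds y) := by
    have h1 : Filter.Tendsto (fun n => TT (u (φ n)) - u (φ n)) Filter.atTop (nhds 0) :=
      hdiff.comp hφ.tendsto_atTop
    have := hconv.sub h1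
    simpa using this
  have hTy : ‖T y‖ = 1 := by
    have h1 : Filter.Tendsto (fun n => ‖T (u (φ n))‖) Filter.atTop (nhds ‖T y‖) :=
      ((T.continuous.tendsto y).comp huconv).norm
    have h2 : Filter.Tendsto (fun n => ‖T (u (φ n))‖) Filter.atTop (nhds 1) :=
      hTu_lim.comp hφ.tendsto_atTop
    exact tendsto_nhds_unique h1 h2
  have hy_le : ‖y‖ ≤ 1 := by
    have h1 : Filter.Tendsto (fun n => ‖u (φ n)‖) Filter.atTop (nhds ‖y‖) := huconv.norm
    exact le_of_tendsto h1 (Filter.Eventually.of_forall fun n => (hu1 (φ n)).le)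
  have hy0 : y ≠ 0 := by
    intro h; rw [h] at hTy; simp at hTy
  have hTy0 : T y ≠ 0 := by
    intro h; rw [h] at hTy; simp at hTy
  have := hkey (T y) y hTy0 hy0
  rw [real_inner_self_eq_norm_sq, abs_of_nonneg (by positivity), hTy] at this
  simp only [one_pow, one_mul] at this
  exact absurd hy_le (not_le.mpr this)
end
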